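/- Let n and k be nonnegative integers with n > k, and let Σ = Σ_{i ≥ 0} C(n, 2i+1)·i^k. Then ν(Σ) ≥ n − 1 − k − α(k) (equivalently, 2^{max(0, n−1−k−α(k))} divides Σ), and ν(Σ) = n − 1 − k − α(k) holds if and only if C(n−1−k, k) is odd. -/

import Mathlib

/-!
Write `i ^ k = ∑ⱼ j! S(k, j) C(i, j)`. Both sides of
`T(n, j) := ∑ᵢ C(n, 2i+1) C(i, j) = 2 ^ (n-2j-1) C(n-1-j, j)` satisfy
`T(n+2, j+1) = 2 T(n+1, j+1) + T(n, j)`, so the sum becomes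
`∑ⱼ j! S(k, j) 2 ^ (n-2j-1) C(n-1-j, j)`. By Legendre, the term `j = k` has valuation
`n - 1 - k - α(k) + ν(C(n-1-k, k))`. For `j < k`, `j! S(k, j)` is a sum of multinomials
`k! / (m₁! ⋯ mⱼ!)` over compositions of `k`, each of valuation `∑ α(mᵢ) - α(k)` by Kummer; as
`α(m) + m ≥ 2` with equality only for `m = 1`, and some `mᵢ ≥ 2`, this is at least
`2j + 1 - k - α(k)`. So all the other terms are divisible by `2 ^ (n - k - α(k))`.
-/

/-- `alpha n` is the number of 1's in the binary expansion of `n`. -/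
def alpha (n : ℕ) : ℕ := (Nat.digits 2 n).sum

/-- `Σ_{i ≥ 0} C(n, 2i+1)·i^k` (a finite sum of natural numbers). -/
def oddSum (n k : ℕ) : ℕ := ∑ i ∈ Finset.range (n + 1), Nat.choose n (2 * i + 1) * i ^ k

open Finset Nat

/-- `numSurj k j = j! S(k, j)` counts the surjections from a `k`-set onto a `j`-set; `m` is the
number of points not sent to the last value. -/
def numSurj : ℕ → ℕ → ℕ
  | k, 0 => if k = 0 then 1 else 0
  | k, j + 1 => ∑ m ∈ range k, k.choose m * numSurj m j

theorem numSurj_zero_right (k : ℕ) : numSurj k 0 = if k = 0 then 1 else 0 := rfl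

theorem numSurj_succ_right (k j : ℕ) :
    numSurj k (j + 1) = ∑ m ∈ range k, k.choose m * numSurj m j := rfl

theorem numSurj_eq_zero_of_lt {k j : ℕ} (h : k < j) : numSurj k j = 0 := by
  induction j generalizing k with
  | zero => omega
  | succ j ih =>
    refine sum_eq_zero fun m hm => ?_
    rw [ih (by simp at hm; omega), mul_zero]

theorem numSurj_self (k : ℕ) : numSurj k k = k ! := by
  induction k with
  | zero => rfl
  | succ k ih =>
    rw [numSurj_succ_right, sum_range_succ, ih, choose_succ_self_right, factorial_succ,
      sum_eq_zero fun m hm => by rw [numSurj_eq_zero_of_lt (mem_range.1 hm), mul_zero], zero_add]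

theorem sum_range_numSurj_mul {k N : ℕ} (h : k < N) (f : ℕ → ℕ) :
    ∑ j ∈ range N, numSurj k j * f j = ∑ j ∈ range (k + 1), numSurj k j * f j := by
  refine (sum_subset (range_subset_range.2 h) fun j _ hj => ?_).symm
  rw [numSurj_eq_zero_of_lt (by simp at hj; omega), zero_mul]

theorem pow_eq_sum_numSurj_mul_choose (i k : ℕ) :
    i ^ k = ∑ j ∈ range (k + 1), numSurj k j * i.choose j := by
  induction i generalizing k with
  | zero =>
    rw [sum_range_succ']
    cases k <;> simp [numSurj_zero_right]
  | succ i ih =>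
    have hsurj : ∑ j ∈ range k, numSurj k (j + 1) * i.choose j
        = ∑ m ∈ range k, k.choose m * i ^ m := by
      simp only [numSurj_succ_right, sum_mul]
      rw [sum_comm]
      refine sum_congr rfl fun m hm => ?_
      rw [ih m, ← sum_range_numSurj_mul (mem_range.1 hm), mul_sum]
      exact sum_congr rfl fun j _ => by ring
    calc (i + 1) ^ k = ∑ m ∈ range (k + 1), k.choose m * i ^ m := by
          rw [add_pow]
          exact sum_congr rfl fun m _ => by rw [one_pow, mul_one, Nat.cast_id, mul_comm]
      _ = ∑ j ∈ range k, numSurj k (j + 1) * i.choose j + i ^ k := by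
          rw [sum_range_succ, choose_self, one_mul, hsurj]
      _ = ∑ j ∈ range (k + 1), numSurj k j * (i + 1).choose j := by
          rw [ih k, sum_range_succ', sum_range_succ' _ k]
          simp only [choose_succ_succ', mul_add, sum_add_distrib, choose_zero_right]
          ring

theorem padicValNat_two_factorial_add_alpha (r : ℕ) : padicValNat 2 r ! + alpha r = r := by
  have := sub_one_mul_padicValNat_factorial (p := 2) r
  have := digit_sum_le 2 r
  rw [alpha]
  omega

theorem alpha_pos {r : ℕ} (hr : r ≠ 0) : 0 < alpha r := by
  have := padicValNat_factorial_lt_of_ne_zero 2 hr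
  have := padicValNat_two_factorial_add_alpha r
  omega

theorem padicValNat_two_choose_add_alpha {m k : ℕ} (h : m ≤ k) :
    padicValNat 2 (k.choose m) + alpha k = alpha m + alpha (k - m) := by
  have hval := congrArg (padicValNat 2) (choose_mul_factorial_mul_factorial h)
  rw [padicValNat.mul (mul_ne_zero (choose_pos h).ne' (factorial_ne_zero _))
    (factorial_ne_zero _), padicValNat.mul (choose_pos h).ne' (factorial_ne_zero _)] at hval
  have := padicValNat_two_factorial_add_alpha m
  have := padicValNat_two_factorial_add_alpha (k - m)
  have := padicValNat_two_factorial_add_alpha k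
  omega

theorem padicValNat_two_pow_mul_odd (e : ℕ) {u : ℕ} (hu : Odd u) :
    padicValNat 2 (2 ^ e * u) = e := by
  rw [padicValNat.mul (pow_ne_zero _ two_ne_zero) hu.pos.ne', padicValNat.prime_pow,
    padicValNat.eq_zero_of_not_dvd hu.not_two_dvd_nat, add_zero]

theorem exists_factorial_eq_two_pow_mul_odd (k : ℕ) :
    ∃ u, Odd u ∧ k ! = 2 ^ (k - alpha k) * u := by
  obtain ⟨e, u, hu, hk⟩ := exists_eq_two_pow_mul_odd (factorial_ne_zero k)
  have hval := padicValNat_two_factorial_add_alpha k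
  rw [hk, padicValNat_two_pow_mul_odd e hu] at hval
  exact ⟨u, hu, by rw [hk, show k - alpha k = e by omega]⟩

theorem two_pow_dvd_numSurj {j k : ℕ} (hjk : j < k) :
    2 ^ (2 * j + 1 - k - alpha k) ∣ numSurj k j := by
  induction j generalizing k with
  | zero => simp [numSurj_zero_right, show k ≠ 0 by omega]
  | succ j ih =>
    refine dvd_sum fun m hm => ?_
    have hmk := mem_range.1 hm
    have hchoose := padicValNat_two_choose_add_alpha hmk.le
    have hα := alpha_pos (show k - m ≠ 0 by omega)
    have hdvd {b : ℕ} (h : 2 ^ b ∣ numSurj m j)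
        (hb : 2 * (j + 1) + 1 - k - alpha k ≤ padicValNat 2 (k.choose m) + b) :
        2 ^ (2 * (j + 1) + 1 - k - alpha k) ∣ k.choose m * numSurj m j :=
      (pow_dvd_pow 2 hb).trans (pow_add 2 _ b ▸ mul_dvd_mul pow_padicValNat_dvd h)
    rcases lt_trichotomy m j with hlt | rfl | hgt
    · simp [numSurj_eq_zero_of_lt hlt]
    · have := padicValNat_two_factorial_add_alpha m
      exact hdvd (b := padicValNat 2 m !) (by rw [numSurj_self]; exact pow_padicValNat_dvd)
        (by omega)
    · exact hdvd (ih hgt) (by omega)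

def oddChooseSum (n j : ℕ) : ℕ := ∑ i ∈ range (n + 1), n.choose (2 * i + 1) * i.choose j

def evenChooseSum (n j : ℕ) : ℕ := ∑ i ∈ range (n + 1), n.choose (2 * i) * i.choose j

theorem oddChooseSum_succ (n j : ℕ) :
    oddChooseSum (n + 1) j = oddChooseSum n j + evenChooseSum n j := by
  simp only [oddChooseSum, evenChooseSum]
  rw [sum_range_succ, choose_eq_zero_of_lt (show n + 1 < 2 * (n + 1) + 1 by omega), zero_mul,
    add_zero, ← sum_add_distrib]
  exact sum_congr rfl fun i _ => by rw [choose_succ_succ', add_mul, add_comm]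

theorem evenChooseSum_succ (n j : ℕ) : evenChooseSum (n + 1) j
    = evenChooseSum n j + ∑ i ∈ range (n + 1), n.choose (2 * i + 1) * (i + 1).choose j := by
  simp only [evenChooseSum]
  have hshift : ∑ i ∈ range (n + 1), n.choose (2 * i) * i.choose j
      = ∑ i ∈ range (n + 1), n.choose (2 * (i + 1)) * (i + 1).choose j
        + n.choose 0 * choose 0 j := by
    rw [← sum_range_succ' (fun i => n.choose (2 * i) * i.choose j), sum_range_succ _ (n + 1),
      choose_eq_zero_of_lt (show n < 2 * (n + 1) by omega), zero_mul, add_zero]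
  rw [sum_range_succ', hshift]
  simp only [show ∀ i, 2 * (i + 1) = 2 * i + 1 + 1 from fun i => rfl, choose_succ_succ', add_mul,
    sum_add_distrib, mul_zero, choose_zero_right]
  ring

theorem oddChooseSum_add_two (n j : ℕ) :
    oddChooseSum (n + 2) j + oddChooseSum n j = 2 * oddChooseSum (n + 1) j
      + ∑ i ∈ range (n + 1), n.choose (2 * i + 1) * (i + 1).choose j := by
  have : oddChooseSum (n + 2) j = _ := oddChooseSum_succ (n + 1) j
  have := oddChooseSum_succ n j
  have := evenChooseSum_succ n j
  omega

theorem oddChooseSum_add_two_zero (n : ℕ) :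
    oddChooseSum (n + 2) 0 = 2 * oddChooseSum (n + 1) 0 := by
  have h := oddChooseSum_add_two n 0
  simp only [oddChooseSum, choose_zero_right] at h ⊢
  omega

theorem oddChooseSum_add_two_succ (n j : ℕ) :
    oddChooseSum (n + 2) (j + 1) = 2 * oddChooseSum (n + 1) (j + 1) + oddChooseSum n j := by
  have h := oddChooseSum_add_two n (j + 1)
  have hpascal : ∑ i ∈ range (n + 1), n.choose (2 * i + 1) * (i + 1).choose (j + 1)
      = oddChooseSum n j + oddChooseSum n (j + 1) := by
    simp only [oddChooseSum, choose_succ_succ', mul_add, sum_add_distrib]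
  omega

theorem oddChooseSum_eq_zero {n j : ℕ} (h : n ≤ 2 * j) : oddChooseSum n j = 0 := by
  refine sum_eq_zero fun i _ => ?_
  rcases lt_or_ge i j with hij | hij
  · rw [choose_eq_zero_of_lt hij, mul_zero]
  · rw [choose_eq_zero_of_lt (by omega), zero_mul]

theorem oddChooseSum_two_mul_add_one_add (j e : ℕ) :
    oddChooseSum (2 * j + 1 + e) j = 2 ^ e * (j + e).choose j := by
  induction j generalizing e with
  | zero =>
    induction e with
    | zero => decide
    | succ e ih =>
      rw [show 2 * 0 + 1 + (e + 1) = e + 2 by ring, oddChooseSum_add_two_zero,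
        show e + 1 = 2 * 0 + 1 + e by ring, ih]
      simp
      ring
  | succ j ih =>
    induction e with
    | zero =>
      rw [show 2 * (j + 1) + 1 + 0 = 2 * j + 1 + 2 by ring, oddChooseSum_add_two_succ,
        oddChooseSum_eq_zero (by omega), ← add_zero (2 * j + 1), ih]
      simp
    | succ e ihe =>
      rw [show 2 * (j + 1) + 1 + (e + 1) = 2 * j + 1 + (e + 1) + 2 by ring,
        oddChooseSum_add_two_succ, show 2 * j + 1 + (e + 1) + 1 = 2 * (j + 1) + 1 + e by ring,
        ihe, ih, show j + 1 + (e + 1) = (j + 1 + e) + 1 by ring, choose_succ_succ',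
        show j + (e + 1) = j + 1 + e by ring]
      ring

theorem oddSum_eq_sum_numSurj_mul_oddChooseSum (n k : ℕ) :
    oddSum n k = ∑ j ∈ range (k + 1), numSurj k j * oddChooseSum n j := by
  simp only [oddSum, oddChooseSum, pow_eq_sum_numSurj_mul_choose _ k, mul_sum]
  rw [sum_comm]
  exact sum_congr rfl fun j _ => sum_congr rfl fun i _ => by ring

theorem oddSum_eq_factorial_mul_add (n k : ℕ) :
    oddSum n k = k ! * oddChooseSum n k + ∑ j ∈ range k, numSurj k j * oddChooseSum n j := by
  rw [oddSum_eq_sum_numSurj_mul_oddChooseSum, sum_range_succ, numSurj_self, add_comm]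

theorem two_pow_dvd_sum_numSurj_mul_oddChooseSum (n k : ℕ) :
    2 ^ (n - k - alpha k) ∣ ∑ j ∈ range k, numSurj k j * oddChooseSum n j := by
  refine dvd_sum fun j hj => ?_
  rcases le_or_gt n (2 * j) with hn | hn
  · simp [oddChooseSum_eq_zero hn]
  · obtain ⟨e, rfl⟩ := exists_add_of_le (show 2 * j + 1 ≤ n from hn)
    rw [oddChooseSum_two_mul_add_one_add, ← mul_assoc]
    refine (pow_dvd_pow 2 ?_).trans (Dvd.dvd.mul_right (pow_add 2 _ e ▸
      mul_dvd_mul (two_pow_dvd_numSurj (mem_range.1 hj)) (dvd_refl _)) _)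
    omega

theorem two_pow_dvd_and_padicValNat_eq_iff {S e a b : ℕ} (hS : S = 2 ^ e * a + b)
    (hb : 2 ^ (e + 1) ∣ b) : 2 ^ e ∣ S ∧ (S ≠ 0 ∧ padicValNat 2 S = e ↔ Odd a) := by
  obtain ⟨c, rfl⟩ := hb
  have hS' : S = 2 ^ e * (a + 2 * c) := by rw [hS]; ring
  refine ⟨hS' ▸ dvd_mul_right _ _, ?_⟩
  rcases even_or_odd a with ⟨a', rfl⟩ | ha
  · have hdvd : 2 ^ (e + 1) ∣ S := ⟨a' + c, by rw [hS']; ring⟩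
    refine iff_of_false (fun ⟨hS0, hval⟩ => ?_) (by simp [← two_mul])
    have := (padicValNat_dvd_iff_le hS0).1 hdvd
    omega
  · have hodd : Odd (a + 2 * c) := ha.add_even (even_two_mul c)
    refine iff_of_true ⟨?_, hS' ▸ padicValNat_two_pow_mul_odd e hodd⟩ ha
    rw [hS']
    exact mul_ne_zero (pow_ne_zero _ two_ne_zero) hodd.pos.ne'

theorem stmt5 (n k : ℕ) (h : k < n) :
    (2 ^ (((n : ℤ) - 1 - (k : ℤ) - (alpha k : ℤ)).toNat) ∣ oddSum n k) ∧
    ((oddSum n k ≠ 0 ∧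
        (padicValNat 2 (oddSum n k) : ℤ) = (n : ℤ) - 1 - (k : ℤ) - (alpha k : ℤ))
      ↔ Odd (Nat.choose (n - 1 - k) k)) := by
  have hsplit := oddSum_eq_factorial_mul_add n k
  have hrest := two_pow_dvd_sum_numSurj_mul_oddChooseSum n k
  have hα : alpha k ≤ k := digit_sum_le 2 k
  rcases le_or_gt (2 * k + 1) n with hn | hn
  · obtain ⟨e, rfl⟩ := exists_add_of_le hn
    obtain ⟨u, hu, hfac⟩ := exists_factorial_eq_two_pow_mul_odd k
    rw [oddChooseSum_two_mul_add_one_add, hfac,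
      show 2 ^ (k - alpha k) * u * (2 ^ e * (k + e).choose k)
        = 2 ^ (k - alpha k + e) * (u * (k + e).choose k) by ring] at hsplit
    obtain ⟨hdvd, hval⟩ := two_pow_dvd_and_padicValNat_eq_iff hsplit
      (by convert hrest using 2; omega)
    rw [Nat.odd_mul, and_iff_right hu] at hval
    rw [show 2 * k + 1 + e - 1 - k = k + e by omega, ← hval]
    constructor
    · convert hdvd using 2; omega
    · omega
  · rw [oddChooseSum_eq_zero (by omega), mul_zero, zero_add] at hsplit
    rw [hsplit, choose_eq_zero_of_lt (by omega)]
    refine ⟨(pow_dvd_pow 2 (by omega)).trans hrest,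
      iff_of_false (fun ⟨hS0, hval⟩ => ?_) (by simp)⟩
    have := (padicValNat_dvd_iff_le hS0).1 hrest
    omega
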